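/- arXiv:2504.15907 — 2 statements merged into one kernel-verified Lean document; each statement's English description precedes it below -/
import Mathlib

section
/- Let a, p₁, p₂, b be nonzero complex constants with 9ab² = −4. If f is an entire function satisfying f(z)² + a·(f'(z))² = p₁·e^{bz} + p₂·e^{−bz} for all z ∈ ℂ, then either there exist complex constants l₁, l₂ with l₂² = (9/8)p₁ and l₁² = p₂²/(8p₁) such that f(z) = l₁e^{−(3b/2)z} + l₂e^{(b/2)z} for all z, or there exist complex constants l₃, l₄ with l₄² = (9/8)p₂ and l₃² = p₁²/(8p₂) such that f(z) = l₃e^{(3b/2)z} + l₄e^{−(b/2)z} for all z. -/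
/-!
Put `K = 3bf + 2f'` and `M = 3bf - 2f'`. Since `9ab² = -4`, the equation says
`K M = 9b²(p₁e^{bz} + p₂e^{-bz})`. The entire functions
`A = defect b p₁ f = e^{-2bz}(K² - 18b²p₁e^{bz})` and
`B = defect (-b) p₂ f = e^{2bz}(M² - 18b²p₂e^{-bz})` both solve the linear equation
`2f'y' = 3b²fy`; as `f'` is not identically zero, their Wronskian vanishes and `B = cA`.
If `A ≡ 0`, then `K = γe^{bz/2}` with `γ² = 18b²p₁`, and `6bf = K + M` is in the first family;
`B ≡ 0` is the same case after `b ↦ -b`, `p₁ ↔ p₂`, and gives the second family.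
Otherwise `c ≠ 0`, and `K²(B - cA) = 0` is a quadratic relation for `y = K²e^{-bz}`; completing
the square, `W = cy + 9b²(p₂e^{2bz} - cp₁)` satisfies `W² = 81b⁴(p₂² + cp₁²)(e^{4bz} + c)`.
So `W²` or, if `p₂² + cp₁² = 0`, `(Ke^{-bz/2})²` has the form `αe^{βz} + δ` with `α, δ ≠ 0`;
such a function has simple zeros, hence is not the square of an entire function.
-/

open Complex Metric Topology

theorem exp_mul_mul_exp_neg_mul (c z : ℂ) : exp (c * z) * exp (-c * z) = 1 := by
  rw [← exp_add, neg_mul, add_neg_cancel, exp_zero]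

theorem Differentiable.eq_zero_or_eq_zero_of_mul_eq_zero {u v : ℂ → ℂ} (hu : Differentiable ℂ u)
    (hv : Differentiable ℂ v) (h : ∀ z, u z * v z = 0) : (∀ z, u z = 0) ∨ ∀ z, v z = 0 := by
  simpa using AnalyticOnNhd.eq_zero_or_eq_zero_of_mul_eq_zero (fun z _ ↦ hu.analyticAt z)
    (fun z _ ↦ hv.analyticAt z) (fun z _ ↦ h z) isPreconnected_univ

theorem eq_const_mul_of_deriv_mul_eq {u v : ℂ → ℂ} (hu : Differentiable ℂ u)
    (hv : Differentiable ℂ v) (h : ∀ z, deriv u z * v z = u z * deriv v z) {z₀ : ℂ}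
    (hz₀ : u z₀ ≠ 0) : ∀ z, v z = v z₀ / u z₀ * u z := by
  obtain ⟨r, hr, hball⟩ := eventually_nhds_iff_ball.1 ((hu z₀).continuousAt.eventually_ne hz₀)
  have hderiv : ∀ z ∈ ball z₀ r, HasDerivAt (fun z ↦ v z / u z) 0 z := fun z hz ↦ by
    refine ((hv z).hasDerivAt.fun_div (hu z).hasDerivAt (hball z hz)).congr_deriv ?_
    rw [div_eq_zero_iff]
    exact Or.inl (by linear_combination -h z)
  have hloc : v =ᶠ[𝓝 z₀] fun z ↦ v z₀ / u z₀ * u z := by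
    filter_upwards [ball_mem_nhds z₀ hr] with z hz
    have := isOpen_ball.is_const_of_deriv_eq_zero (convex_ball z₀ r).isPreconnected
      (fun w hw ↦ (hderiv w hw).differentiableAt.differentiableWithinAt)
      (fun w hw ↦ (hderiv w hw).deriv) hz (mem_ball_self hr)
    rw [← this, div_mul_cancel₀ _ (hball z hz)]
  exact congrFun (AnalyticOnNhd.eq_of_eventuallyEq (fun z _ ↦ hv.analyticAt z)
    (fun z _ ↦ ((hu.const_mul _).analyticAt z)) hloc)

theorem exists_eq_const_mul_of_mul_deriv_eq {φ ψ u v : ℂ → ℂ} (hφ : Differentiable ℂ φ)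
    (hu : Differentiable ℂ u) (hv : Differentiable ℂ v) (hφ₀ : ¬ ∀ z, φ z = 0)
    (hu₀ : ¬ ∀ z, u z = 0) (hu' : ∀ z, φ z * deriv u z = ψ z * u z)
    (hv' : ∀ z, φ z * deriv v z = ψ z * v z) : ∃ c, ∀ z, v z = c * u z := by
  have hwronskian : ∀ z, deriv u z * v z = u z * deriv v z := by
    refine ((hφ.eq_zero_or_eq_zero_of_mul_eq_zero ((hu.deriv.mul hv).sub (hu.mul hv.deriv))
      fun z ↦ ?_).resolve_left hφ₀ · |> sub_eq_zero.1)
    simp only [Pi.sub_apply, Pi.mul_apply]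
    linear_combination v z * hu' z - u z * hv' z
  obtain ⟨z₀, hz₀⟩ := not_forall.1 hu₀
  exact ⟨_, eq_const_mul_of_deriv_mul_eq hu hv hwronskian hz₀⟩

theorem not_forall_sq_eq_mul_exp_add {g : ℂ → ℂ} (hg : Differentiable ℂ g) {α β c : ℂ}
    (hα : α ≠ 0) (hβ : β ≠ 0) (hc : c ≠ 0) : ¬ ∀ z, g z ^ 2 = α * exp (c * z) + β := by
  intro h
  set z₀ := log (-β / α) / c
  have hz₀ : α * exp (c * z₀) = -β := by
    rw [mul_div_cancel₀ _ hc, exp_log (div_ne_zero (neg_ne_zero.2 hβ) hα), mul_div_cancel₀ _ hα]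
  have hg₀ : g z₀ = 0 := by simpa [hz₀] using h z₀
  have hsq : HasDerivAt (fun z ↦ g z ^ 2) 0 z₀ := by
    simpa [hg₀] using (hg z₀).hasDerivAt.fun_pow 2
  have hrhs : HasDerivAt (fun z ↦ α * exp (c * z) + β) (α * exp (c * z₀) * c) z₀ :=
    (((hasDerivAt_id' z₀).const_mul c).cexp.const_mul α).add_const β |>.congr_deriv (by ring)
  rw [funext h] at hsq
  simpa [hz₀, hβ, hc] using hrhs.unique hsq

theorem eq_zero_of_forall_mul_exp_add_mul_exp_neg {b p q : ℂ} (hb : b ≠ 0)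
    (h : ∀ z, p * exp (b * z) + q * exp (-b * z) = 0) : p = 0 := by
  have hsq : ∀ z, p * exp (2 * b * z) + q = 0 := fun z ↦ by
    have hE : exp (b * z) ^ 2 = exp (2 * b * z) := by rw [sq, ← exp_add]; ring_nf
    linear_combination exp (b * z) * h z - q * exp_mul_mul_exp_neg_mul b z - p * hE
  have h₁ := hsq (Real.pi * I / (2 * b))
  rw [mul_div_cancel₀ _ (mul_ne_zero two_ne_zero hb), exp_pi_mul_I] at h₁
  have h₀ := hsq 0
  rw [mul_zero, exp_zero] at h₀
  linear_combination (h₀ - h₁) / 2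

def IsSolution (a b p₁ p₂ : ℂ) (f : ℂ → ℂ) : Prop :=
  ∀ z, f z ^ 2 + a * deriv f z ^ 2 = p₁ * exp (b * z) + p₂ * exp (-b * z)

noncomputable def defect (b p : ℂ) (f : ℂ → ℂ) (z : ℂ) : ℂ :=
  (3 * b * f z + 2 * deriv f z) ^ 2 * exp (-b * z) ^ 2 - 18 * b ^ 2 * p * exp (-b * z)

theorem differentiable_defect {f : ℂ → ℂ} (hf : Differentiable ℂ f) (b p : ℂ) :
    Differentiable ℂ (defect b p f) := by
  have := hf.deriv
  unfold defect
  fun_prop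

namespace IsSolution

variable {a b p₁ p₂ : ℂ} {f : ℂ → ℂ}

theorem neg (h : IsSolution a b p₁ p₂ f) : IsSolution a (-b) p₂ p₁ f := fun z ↦ by
  rw [h z, neg_neg, add_comm]

theorem mul_eq (hab : 9 * a * b ^ 2 = -4) (h : IsSolution a b p₁ p₂ f) (z : ℂ) :
    (3 * b * f z + 2 * deriv f z) * (3 * b * f z - 2 * deriv f z)
      = 9 * b ^ 2 * (p₁ * exp (b * z) + p₂ * exp (-b * z)) := by
  linear_combination 9 * b ^ 2 * h z - deriv f z ^ 2 * hab

theorem deriv_eq (hf : Differentiable ℂ f) (h : IsSolution a b p₁ p₂ f) (z : ℂ) :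
    2 * f z * deriv f z + 2 * a * deriv f z * deriv (deriv f) z
      = b * p₁ * exp (b * z) - b * p₂ * exp (-b * z) := by
  have hlhs : HasDerivAt (fun z ↦ f z ^ 2 + a * deriv f z ^ 2) _ z :=
    ((hf z).hasDerivAt.fun_pow 2).add ((hf.deriv z).hasDerivAt.fun_pow 2 |>.const_mul a)
  have hrhs : HasDerivAt (fun z ↦ p₁ * exp (b * z) + p₂ * exp (-b * z)) _ z :=
    ((((hasDerivAt_id' z).const_mul b).cexp).const_mul p₁).add
      ((((hasDerivAt_id' z).const_mul (-b)).cexp).const_mul p₂)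
  rw [funext h] at hlhs
  linear_combination hlhs.unique hrhs

theorem not_forall_deriv_eq_zero (hp₁ : p₁ ≠ 0) (hb : b ≠ 0) (hf : Differentiable ℂ f)
    (h : IsSolution a b p₁ p₂ f) : ¬ ∀ z, deriv f z = 0 := fun h₀ ↦ hp₁ <|
  eq_zero_of_forall_mul_exp_add_mul_exp_neg (q := -p₂) hb fun z ↦ mul_left_cancel₀ hb <| by
    linear_combination h₀ z * (2 * f z + 2 * a * deriv (deriv f) z) - h.deriv_eq hf z

theorem two_mul_deriv_mul_deriv_defect (hab : 9 * a * b ^ 2 = -4) (hf : Differentiable ℂ f)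
    (h : IsSolution a b p₁ p₂ f) (z : ℂ) :
    2 * deriv f z * deriv (defect b p₁ f) z = 3 * b ^ 2 * f z * defect b p₁ f z := by
  have hK : HasDerivAt (fun z ↦ 3 * b * f z + 2 * deriv f z) _ z :=
    ((hf z).hasDerivAt.const_mul (3 * b)).add ((hf.deriv z).hasDerivAt.const_mul 2)
  have hF : HasDerivAt (fun z ↦ exp (-b * z)) _ z := ((hasDerivAt_id' z).const_mul (-b)).cexp
  have hA : HasDerivAt (defect b p₁ f) _ z :=
    ((hK.fun_pow 2).mul (hF.fun_pow 2)).sub (hF.const_mul (18 * b ^ 2 * p₁))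
  rw [hA.deriv, defect]
  set K := 3 * b * f z + 2 * deriv f z
  set F := exp (-b * z)
  linear_combination F ^ 2 * K * (b * deriv f z ^ 2 + 2 * deriv f z * deriv (deriv f) z) * hab
    - 9 * b ^ 3 * F ^ 2 * K * h z - 9 * b ^ 2 * F ^ 2 * K * h.deriv_eq hf z
    - 18 * b ^ 3 * p₁ * F * K * exp_mul_mul_exp_neg_mul b z

theorem first_family_of_defect_eq_zero (hp₁ : p₁ ≠ 0) (hab : 9 * a * b ^ 2 = -4)
    (hf : Differentiable ℂ f) (h : IsSolution a b p₁ p₂ f) (hA : ∀ z, defect b p₁ f z = 0) :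
    ∃ l₁ l₂ : ℂ, l₂ ^ 2 = 9 / 8 * p₁ ∧ l₁ ^ 2 = p₂ ^ 2 / (8 * p₁) ∧
      ∀ z, f z = l₁ * exp (-(3 * b / 2) * z) + l₂ * exp (b / 2 * z) := by
  have hb : b ≠ 0 := by rintro rfl; norm_num at hab
  set K := fun z ↦ 3 * b * f z + 2 * deriv f z
  have hw : ∀ z, exp (b / 2 * z) ^ 2 = exp (b * z) := fun z ↦ by rw [sq, ← exp_add]; ring_nf
  unfold defect at hA
  have hK : ∀ z, K z ^ 2 = 18 * b ^ 2 * p₁ * exp (b * z) := fun z ↦ by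
    linear_combination exp (b * z) ^ 2 * hA z
      - (K z ^ 2 * (exp (b * z) * exp (-b * z) + 1) - 18 * b ^ 2 * p₁ * exp (b * z)) *
        exp_mul_mul_exp_neg_mul b z
  obtain ⟨γ₀, hγ₀⟩ := IsAlgClosed.exists_pow_nat_eq (18 * b ^ 2 * p₁) two_pos
  obtain ⟨γ, hγ, hKγ⟩ : ∃ γ : ℂ, γ ^ 2 = 18 * b ^ 2 * p₁ ∧ ∀ z, K z = γ * exp (b / 2 * z) := by
    have hdiff (s : ℂ) : Differentiable ℂ fun z ↦ K z + s * exp (b / 2 * z) := by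
      have := hf.deriv; fun_prop
    rcases (hdiff (-γ₀)).eq_zero_or_eq_zero_of_mul_eq_zero (hdiff γ₀) (fun z ↦ by
      linear_combination hK z - exp (b * z) * hγ₀ - γ₀ ^ 2 * hw z) with h₁ | h₁
    · exact ⟨γ₀, hγ₀, fun z ↦ by linear_combination h₁ z⟩
    · exact ⟨-γ₀, by rw [neg_sq, hγ₀], fun z ↦ by linear_combination h₁ z⟩
  have hγ_ne : γ ≠ 0 := by rintro rfl; simp [hb, hp₁] at hγ
  refine ⟨3 * b * p₂ / (2 * γ), 9 * b * p₁ / (2 * γ), ?_, ?_, fun z ↦ ?_⟩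
  · field_simp
    linear_combination -4 * hγ
  · field_simp
    linear_combination -4 * p₂ ^ 2 * hγ
  · have hne : 6 * b * γ * exp (b / 2 * z) ≠ 0 := by simp [hb, hγ_ne, exp_ne_zero]
    have hwv : exp (b / 2 * z) * exp (-(3 * b / 2) * z) = exp (-b * z) := by
      rw [← exp_add]; ring_nf
    have h₁ : 2 * γ * (3 * b * p₂ / (2 * γ)) = 3 * b * p₂ := by field_simp
    have h₂ : 2 * γ * (9 * b * p₁ / (2 * γ)) = 9 * b * p₁ := by field_simp
    apply mul_left_cancel₀ hne
    linear_combination -6 * b * f z * hKγ z + h.mul_eq hab z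
      + (K z + γ * exp (b / 2 * z)) * hKγ z + exp (b / 2 * z) ^ 2 * hγ - 9 * b ^ 2 * p₁ * hw z
      - 3 * b * exp (b / 2 * z) * exp (-(3 * b / 2) * z) * h₁ - 9 * b ^ 2 * p₂ * hwv
      - 3 * b * exp (b / 2 * z) ^ 2 * h₂

theorem not_forall_defect_neg_eq_mul_defect (hp₁ : p₁ ≠ 0) (hp₂ : p₂ ≠ 0)
    (hab : 9 * a * b ^ 2 = -4) (hf : Differentiable ℂ f) (h : IsSolution a b p₁ p₂ f) {c : ℂ}
    (hc : c ≠ 0) : ¬ ∀ z, defect (-b) p₂ f z = c * defect b p₁ f z := by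
  intro hBA
  have hb : b ≠ 0 := by rintro rfl; norm_num at hab
  simp only [defect, neg_neg] at hBA
  set K := fun z ↦ 3 * b * f z + 2 * deriv f z
  have hKdiff : Differentiable ℂ K := by have := hf.deriv; fun_prop
  have hquad : ∀ z, c * (K z ^ 2 * exp (-b * z)) ^ 2
      + 18 * b ^ 2 * (p₂ * exp (b * z) ^ 2 - c * p₁) * (K z ^ 2 * exp (-b * z))
      - 81 * b ^ 4 * (p₁ * exp (b * z) ^ 2 + p₂) ^ 2 = 0 := fun z ↦ by
    set E := exp (b * z)
    set F := exp (-b * z)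
    linear_combination -K z ^ 2 * hBA z
      + 18 * b ^ 2 * p₂ * E * K z ^ 2 * exp_mul_mul_exp_neg_mul b z
      - E ^ 2 * (K z * (2 * deriv f z - 3 * b * f z) - 9 * b ^ 2 * (p₁ * E + p₂ * F))
        * h.mul_eq hab z
      + 81 * b ^ 4 * p₂ * (2 * p₁ * E ^ 2 + p₂ * E * F + p₂) * exp_mul_mul_exp_neg_mul b z
  set W := fun z ↦ c * K z ^ 2 * exp (-b * z) + 9 * b ^ 2 * (p₂ * exp (b * z) ^ 2 - c * p₁)
  have hW : ∀ z, W z ^ 2 = 81 * b ^ 4 * (p₂ ^ 2 + c * p₁ ^ 2) * exp (4 * b * z)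
      + 81 * b ^ 4 * (p₂ ^ 2 + c * p₁ ^ 2) * c := fun z ↦ by
    have hE : exp (b * z) ^ 4 = exp (4 * b * z) := by rw [← exp_nat_mul]; ring_nf
    linear_combination c * hquad z + 81 * b ^ 4 * (p₂ ^ 2 + c * p₁ ^ 2) * hE
  by_cases hd : p₂ ^ 2 + c * p₁ ^ 2 = 0
  · refine not_forall_sq_eq_mul_exp_add (g := fun z ↦ p₂ * K z * exp (-(b / 2) * z))
      (by fun_prop) (α := 9 * b ^ 2 * p₁ ^ 2 * p₂) (β := 9 * b ^ 2 * p₁ * p₂ ^ 2)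
      (by simp [hb, hp₁, hp₂]) (by simp [hb, hp₁, hp₂]) (mul_ne_zero two_ne_zero hb) fun z ↦ ?_
    have hW₀ : W z = 0 := by simpa [hd] using hW z
    have hu : exp (-(b / 2) * z) ^ 2 = exp (-b * z) := by rw [sq, ← exp_add]; ring_nf
    have hE : exp (b * z) ^ 2 = exp (2 * b * z) := by rw [sq, ← exp_add]; ring_nf
    linear_combination p₂ ^ 2 * K z ^ 2 * hu - p₁ ^ 2 * hW₀
      + (K z ^ 2 * exp (-b * z) - 9 * b ^ 2 * p₁) * hd + 9 * b ^ 2 * p₁ ^ 2 * p₂ * hE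
  · exact not_forall_sq_eq_mul_exp_add (by fun_prop) (by simp [hb, hd]) (by simp [hb, hd, hc])
      (by simp [hb]) hW

end IsSolution

theorem stmt_3_general (a p₁ p₂ b : ℂ) (hp₁ : p₁ ≠ 0) (hp₂ : p₂ ≠ 0)
    (hab : 9 * a * b ^ 2 = -4)
    (f : ℂ → ℂ) (hf : Differentiable ℂ f)
    (heq : ∀ z : ℂ, f z ^ 2 + a * (deriv f z) ^ 2
        = p₁ * Complex.exp (b * z) + p₂ * Complex.exp (-b * z)) :
    (∃ l₁ l₂ : ℂ, l₂ ^ 2 = 9 / 8 * p₁ ∧ l₁ ^ 2 = p₂ ^ 2 / (8 * p₁) ∧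
      ∀ z : ℂ, f z = l₁ * Complex.exp (-(3 * b / 2) * z) + l₂ * Complex.exp (b / 2 * z)) ∨
    (∃ l₃ l₄ : ℂ, l₄ ^ 2 = 9 / 8 * p₂ ∧ l₃ ^ 2 = p₁ ^ 2 / (8 * p₂) ∧
      ∀ z : ℂ, f z = l₃ * Complex.exp (3 * b / 2 * z) + l₄ * Complex.exp (-(b / 2) * z)) := by
  have hsol : IsSolution a b p₁ p₂ f := heq
  have hab' : 9 * a * (-b) ^ 2 = -4 := by rwa [neg_sq]
  by_cases hA : ∀ z, defect b p₁ f z = 0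
  · exact Or.inl (hsol.first_family_of_defect_eq_zero hp₁ hab hf hA)
  by_cases hB : ∀ z, defect (-b) p₂ f z = 0
  · obtain ⟨l₃, l₄, h₄, h₃, hfl⟩ := hsol.neg.first_family_of_defect_eq_zero hp₂ hab' hf hB
    exact Or.inr ⟨l₃, l₄, h₄, h₃, fun z ↦ by simpa only [mul_neg, neg_div, neg_neg] using hfl z⟩
  have hb : b ≠ 0 := by rintro rfl; norm_num at hab
  obtain ⟨c, hc⟩ := exists_eq_const_mul_of_mul_deriv_eq (hf.deriv.const_mul 2)
    (differentiable_defect hf b p₁) (differentiable_defect hf (-b) p₂)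
    (fun h ↦ hsol.not_forall_deriv_eq_zero hp₁ hb hf fun z ↦ by simpa using h z) hA
    (hsol.two_mul_deriv_mul_deriv_defect hab hf)
    (by simpa using hsol.neg.two_mul_deriv_mul_deriv_defect hab' hf)
  have hc₀ : c ≠ 0 := by rintro rfl; exact hB fun z ↦ by simpa using hc z
  exact absurd hc (hsol.not_forall_defect_neg_eq_mul_defect hp₁ hp₂ hab hf hc₀)

theorem stmt_3 (a p₁ p₂ b : ℂ) (ha : a ≠ 0) (hp₁ : p₁ ≠ 0) (hp₂ : p₂ ≠ 0) (hb : b ≠ 0)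
    (hab : 9 * a * b ^ 2 = -4)
    (f : ℂ → ℂ) (hf : Differentiable ℂ f)
    (heq : ∀ z : ℂ, f z ^ 2 + a * (deriv f z) ^ 2
        = p₁ * Complex.exp (b * z) + p₂ * Complex.exp (-b * z)) :
    (∃ l₁ l₂ : ℂ, l₂ ^ 2 = 9 / 8 * p₁ ∧ l₁ ^ 2 = p₂ ^ 2 / (8 * p₁) ∧
      ∀ z : ℂ, f z = l₁ * Complex.exp (-(3 * b / 2) * z) + l₂ * Complex.exp (b / 2 * z)) ∨
    (∃ l₃ l₄ : ℂ, l₄ ^ 2 = 9 / 8 * p₂ ∧ l₃ ^ 2 = p₁ ^ 2 / (8 * p₂) ∧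
      ∀ z : ℂ, f z = l₃ * Complex.exp (3 * b / 2 * z) + l₄ * Complex.exp (-(b / 2) * z)) :=
  stmt_3_general a p₁ p₂ b hp₁ hp₂ hab f hf heq
end

section
/- Let n be an integer with 2 ≤ n ≤ 4 and let a, p₁, p₂, b be nonzero complex constants. Suppose f is an entire function satisfying f(z)ⁿ + a·(f'(z))ⁿ = p₁·e^{bz} + p₂·e^{−bz} for all z ∈ ℂ. Then f and f' have no common zeros; consequently every zero of f is simple (if f(z₀) = 0 then f'(z₀) ≠ 0) and every zero of f' is simple (if f'(z₀) = 0 then f''(z₀) ≠ 0). -/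
/-!
Write `g z = p₁ e^{bz} + p₂ e^{-bz}`. Since `g' = b (p₁ e^{bz} - p₂ e^{-bz})` and `g'' = b² g`,
neither `g` nor `g'` has a double zero: `g z = g' z = 0` would force `2 b p₁ e^{bz} = 0`.
But `F = fⁿ + a (f')ⁿ` has a double zero wherever `f` and `f'` vanish together, and
`F' = n fⁿ⁻¹ f' + a n (f')ⁿ⁻¹ f''` has one wherever `f'` and `f''` do, because `n ≥ 2`.
-/

open Complex

-- `deriv` is `0` where `u` is not differentiable, so this is only meaningful for differentiable `u`.
def HasDoubleZeroAt {𝕜 𝔸 : Type*} [NontriviallyNormedField 𝕜] [NormedRing 𝔸] [NormedAlgebra 𝕜 𝔸]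
    (u : 𝕜 → 𝔸) (z : 𝕜) : Prop :=
  u z = 0 ∧ deriv u z = 0

section DoubleZero

variable {𝕜 𝔸 : Type*} [NontriviallyNormedField 𝕜] [NormedRing 𝔸] [NormedAlgebra 𝕜 𝔸]
  {u v : 𝕜 → 𝔸} {z : 𝕜}

theorem HasDoubleZeroAt.add (hu : HasDoubleZeroAt u z) (hv : HasDoubleZeroAt v z)
    (hu' : DifferentiableAt 𝕜 u z) (hv' : DifferentiableAt 𝕜 v z) :
    HasDoubleZeroAt (fun x => u x + v x) z :=
  ⟨by simp [hu.1, hv.1], by rw [deriv_fun_add hu' hv', hu.2, hv.2, add_zero]⟩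

theorem HasDoubleZeroAt.const_mul (c : 𝔸) (hv : HasDoubleZeroAt v z)
    (hv' : DifferentiableAt 𝕜 v z) : HasDoubleZeroAt (fun x => c * v x) z :=
  ⟨by simp [hv.1], by rw [deriv_const_mul c hv', hv.2, mul_zero]⟩

theorem HasDoubleZeroAt.mul_left (hv : HasDoubleZeroAt v z)
    (hu' : DifferentiableAt 𝕜 u z) (hv' : DifferentiableAt 𝕜 v z) :
    HasDoubleZeroAt (fun x => u x * v x) z :=
  ⟨by simp [hv.1], by rw [deriv_fun_mul hu' hv', hv.1, hv.2]; simp⟩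

theorem hasDoubleZeroAt_mul (hu : u z = 0) (hv : v z = 0)
    (hu' : DifferentiableAt 𝕜 u z) (hv' : DifferentiableAt 𝕜 v z) :
    HasDoubleZeroAt (fun x => u x * v x) z :=
  ⟨by simp [hu], by rw [deriv_fun_mul hu' hv', hu, hv]; simp⟩

theorem hasDoubleZeroAt_pow {n : ℕ} (hn : 2 ≤ n) (hu : u z = 0) (hu' : DifferentiableAt 𝕜 u z) :
    HasDoubleZeroAt (fun x => u x ^ n) z := by
  obtain ⟨m, rfl⟩ := Nat.exists_eq_add_of_le' hn
  have hpow : u z ^ (m + 1) = 0 := by rw [hu, zero_pow m.succ_ne_zero]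
  simpa only [← pow_succ] using
    hasDoubleZeroAt_mul (u := fun x => u x ^ (m + 1)) hpow hu (hu'.pow _) hu'

end DoubleZero

noncomputable def expPair (p₁ p₂ b z : ℂ) : ℂ :=
  p₁ * exp (b * z) + p₂ * exp (-b * z)

section ExpPair

variable (p₁ p₂ b : ℂ)

theorem hasDerivAt_expPair (z : ℂ) :
    HasDerivAt (expPair p₁ p₂ b) (b * expPair p₁ (-p₂) b z) z := by
  have h₁ := ((hasDerivAt_id z).const_mul b).cexp.const_mul p₁
  have h₂ := ((hasDerivAt_id z).const_mul (-b)).cexp.const_mul p₂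
  exact (h₁.fun_add h₂).congr_deriv (by simp only [expPair, id]; ring)

theorem deriv_expPair : deriv (expPair p₁ p₂ b) = fun z => b * expPair p₁ (-p₂) b z :=
  funext fun z => (hasDerivAt_expPair p₁ p₂ b z).deriv

theorem deriv_deriv_expPair :
    deriv (deriv (expPair p₁ p₂ b)) = fun z => b ^ 2 * expPair p₁ p₂ b z := by
  funext z
  rw [deriv_expPair, deriv_const_mul_field, deriv_expPair]
  simp only [neg_neg]
  ring

variable {p₁ p₂ b}

theorem not_hasDoubleZeroAt_expPair (hp₁ : p₁ ≠ 0) (hb : b ≠ 0) (z : ℂ) :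
    ¬ HasDoubleZeroAt (expPair p₁ p₂ b) z := by
  rintro ⟨h₀, h₁⟩
  rw [deriv_expPair] at h₁
  have : 2 * b * (p₁ * exp (b * z)) = 0 := by
    simp only [expPair] at h₀ h₁
    linear_combination b * h₀ + h₁
  exact mul_ne_zero (mul_ne_zero two_ne_zero hb) (mul_ne_zero hp₁ (exp_ne_zero _)) this

theorem not_hasDoubleZeroAt_deriv_expPair (hp₁ : p₁ ≠ 0) (hb : b ≠ 0) (z : ℂ) :
    ¬ HasDoubleZeroAt (deriv (expPair p₁ p₂ b)) z := by
  rintro ⟨h₁, h₂⟩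
  rw [deriv_deriv_expPair] at h₂
  exact not_hasDoubleZeroAt_expPair hp₁ hb z ⟨by simpa [hb] using h₂, h₁⟩

end ExpPair

section Entire

variable {u : ℂ → ℂ} {z : ℂ} (n : ℕ)

theorem deriv_fun_pow_eq_mul_deriv (hu : Differentiable ℂ u) :
    deriv (fun x => u x ^ n) = fun x => (n * u x ^ (n - 1)) * deriv u x :=
  funext fun x => deriv_fun_pow (hu x) n

theorem HasDoubleZeroAt.deriv_pow_of_deriv (hu : Differentiable ℂ u)
    (h : HasDoubleZeroAt (deriv u) z) : HasDoubleZeroAt (deriv fun x => u x ^ n) z := by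
  rw [deriv_fun_pow_eq_mul_deriv n hu]
  exact h.mul_left (((hu z).pow _).const_mul _) (hu.deriv z)

variable {n}

theorem HasDoubleZeroAt.deriv_pow (hu : Differentiable ℂ u) (h : HasDoubleZeroAt u z)
    (hn : 2 ≤ n) : HasDoubleZeroAt (deriv fun x => u x ^ n) z := by
  rw [deriv_fun_pow_eq_mul_deriv n hu]
  refine hasDoubleZeroAt_mul ?_ h.2 (((hu z).pow _).const_mul _) (hu.deriv z)
  rw [h.1, zero_pow (by omega), mul_zero]

end Entire

theorem stmt_10_general (n : ℕ) (hn2 : 2 ≤ n)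
    (a p₁ p₂ b : ℂ) (hp₁ : p₁ ≠ 0) (hb : b ≠ 0)
    (f : ℂ → ℂ) (hf : Differentiable ℂ f)
    (heq : ∀ z : ℂ, f z ^ n + a * (deriv f z) ^ n
        = p₁ * Complex.exp (b * z) + p₂ * Complex.exp (-b * z)) :
    (¬ ∃ z : ℂ, f z = 0 ∧ deriv f z = 0) ∧
    (∀ z₀ : ℂ, f z₀ = 0 → deriv f z₀ ≠ 0) ∧
    (∀ z₀ : ℂ, deriv f z₀ = 0 → deriv (deriv f) z₀ ≠ 0) := by
  have hf' := hf.deriv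
  have hF : (fun z => f z ^ n + a * deriv f z ^ n) = expPair p₁ p₂ b := funext heq
  have hdF : deriv (fun z => f z ^ n + a * deriv f z ^ n)
      = fun z => deriv (fun x => f x ^ n) z + a * deriv (fun x => deriv f x ^ n) z := by
    funext z
    rw [deriv_fun_add ((hf z).fun_pow n) (((hf' z).fun_pow n).const_mul a), deriv_const_mul_field]
  have no_common_zero : ¬ ∃ z, f z = 0 ∧ deriv f z = 0 := by
    rintro ⟨z, h₀, h₁⟩
    have h := (hasDoubleZeroAt_pow hn2 h₀ (hf z)).add
      ((hasDoubleZeroAt_pow hn2 h₁ (hf' z)).const_mul a ((hf' z).pow n))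
      ((hf z).pow n) (((hf' z).pow n).const_mul a)
    rw [hF] at h
    exact not_hasDoubleZeroAt_expPair hp₁ hb z h
  refine ⟨no_common_zero, fun z h₀ h₁ => no_common_zero ⟨z, h₀, h₁⟩, fun z h₁ h₂ => ?_⟩
  have hdz : HasDoubleZeroAt (deriv f) z := ⟨h₁, h₂⟩
  have h := (hdz.deriv_pow_of_deriv n hf).add
    ((hdz.deriv_pow hf' hn2).const_mul a ((hf'.fun_pow n).deriv z))
    ((hf.fun_pow n).deriv z) (((hf'.fun_pow n).deriv z).const_mul a)
  rw [← hdF, hF] at h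
  exact not_hasDoubleZeroAt_deriv_expPair hp₁ hb z h

theorem stmt_10 (n : ℕ) (hn2 : 2 ≤ n) (hn4 : n ≤ 4)
    (a p₁ p₂ b : ℂ) (ha : a ≠ 0) (hp₁ : p₁ ≠ 0) (hp₂ : p₂ ≠ 0) (hb : b ≠ 0)
    (f : ℂ → ℂ) (hf : Differentiable ℂ f)
    (heq : ∀ z : ℂ, f z ^ n + a * (deriv f z) ^ n
        = p₁ * Complex.exp (b * z) + p₂ * Complex.exp (-b * z)) :
    (¬ ∃ z : ℂ, f z = 0 ∧ deriv f z = 0) ∧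
    (∀ z₀ : ℂ, f z₀ = 0 → deriv f z₀ ≠ 0) ∧
    (∀ z₀ : ℂ, deriv f z₀ = 0 → deriv (deriv f) z₀ ≠ 0) :=
  stmt_10_general n hn2 a p₁ p₂ b hp₁ hb f hf heq
end
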